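/- Let χ_{-4} be the primitive Dirichlet character modulo 4 (χ_{-4}(n) = 1 for n ≡ 1 mod 4, −1 for n ≡ 3 mod 4, 0 for even n) and let κ := 2k+1 ≥ 1 with k an integer ≥ 0, and d ≥ 1. Then for each ω ∈ {•,★}, L^ω_d({κ}^d; {χ_{-4}}^d) = i^{κd} · [ Σ_{μ ⊢ d} (ε^ω_μ / z_μ) · ( (-1)^{ℓ(μ)} i^{ℓ(μ_o)} ∏_{j : μ_j even} (2^{κμ_j} − 1) / 2^{ℓ(μ) + κ|μ_o|} ) · ∏_{j : μ_j odd} E_{κμ_j − 1}/(κμ_j − 1)! · ∏_{j : μ_j even} B_{κμ_j}/(κμ_j)! ] · π^{κd}, where μ_o denotes the multiset of odd parts of μ, |μ_o| their sum and ℓ(μ_o) their number. -/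

import Mathlib

open Complex Filter Finset Topology

noncomputable section

/-- Generalized Bernoulli numbers `B_{n,χ}`, defined via the generating function
`∑_{a=1}^{N} χ(a) t e^{at}/(e^{Nt}-1) = ∑_{n≥0} B_{n,χ} t^n/n!`.
Formally, `t e^{at}/(e^{Nt}-1) = e^{at} * g⁻¹` where `g = ∑_m N^{m+1} t^m/(m+1)!`. -/
def genBernoulli {N : ℕ} (χ : DirichletCharacter ℂ N) (n : ℕ) : ℂ :=
  (n.factorial : ℂ) *
    PowerSeries.coeff n
      (∑ a ∈ Finset.Icc 1 N, (χ a) •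
        (PowerSeries.rescale (a : ℂ) (PowerSeries.exp ℂ) *
          (PowerSeries.mk fun m => (N : ℂ) ^ (m + 1) / (m + 1).factorial)⁻¹))

/-- Euler numbers, defined by `2/(e^t + e^{-t}) = ∑ E_n t^n/n!`. -/
def eulerNumber (n : ℕ) : ℚ :=
  (n.factorial : ℚ) *
    PowerSeries.coeff n
      (2 * (PowerSeries.mk fun m => (1 + (-1 : ℚ) ^ m) / m.factorial)⁻¹)

/-- Gauss sum `τ(χ) = ∑_{a=1}^{N} χ(a) e^{2πia/N}`. -/
def gaussSum' {N : ℕ} (χ : DirichletCharacter ℂ N) : ℂ :=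
  ∑ a ∈ Finset.Icc 1 N, χ a * Complex.exp (2 * Real.pi * Complex.I * a / N)

/-- The parity `e(χ) ∈ {0,1}` of a Dirichlet character: `χ(-1) = (-1)^{e(χ)}`. -/
def charParity {N : ℕ} (χ : DirichletCharacter ℂ N) : ℕ :=
  if χ (-1) = 1 then 0 else 1

/-- `z_μ = ∏_i i^{m_i(μ)} m_i(μ)!` for a partition `μ`. -/
def zPart {d : ℕ} (μ : Nat.Partition d) : ℕ :=
  ∏ i ∈ μ.parts.toFinset, i ^ μ.parts.count i * (μ.parts.count i).factorial

/-- Truncated strict multiple `L`-sum `∑_{0<m_1<⋯<m_d≤M} ∏_j χ(m_j)/m_j^κ`. -/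
def multLSumLt {N : ℕ} (χ : DirichletCharacter ℂ N) (d κ M : ℕ) : ℂ :=
  ∑ m ∈ (Fintype.piFinset fun _ : Fin d => Finset.Icc 1 M).filter
      (fun m => ∀ i j : Fin d, i < j → m i < m j),
    ∏ j, χ (m j) / (m j : ℂ) ^ κ

/-- Truncated non-strict multiple `L`-sum `∑_{0<m_1≤⋯≤m_d≤M} ∏_j χ(m_j)/m_j^κ`. -/
def multLSumLe {N : ℕ} (χ : DirichletCharacter ℂ N) (d κ M : ℕ) : ℂ :=
  ∑ m ∈ (Fintype.piFinset fun _ : Fin d => Finset.Icc 1 M).filter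
      (fun m => ∀ i j : Fin d, i < j → m i ≤ m j),
    ∏ j, χ (m j) / (m j : ℂ) ^ κ

/-- The Euler-factor correction `α_χ(s) = ∏_{p | N, p ∤ N(χ')} (1 - χ'(p) p^{-s})`. -/
def alphaFactor {N : ℕ} (χ : DirichletCharacter ℂ N) (s : ℕ) : ℂ :=
  ∏ p ∈ N.primeFactors.filter (fun p => ¬ p ∣ χ.conductor),
    (1 - χ.primitiveCharacter p * (p : ℂ) ^ (-(s : ℤ)))

/-- The primitive Dirichlet character mod 4 (`χ_{-4}`), valued in `ℂ`. -/
def chiFour : DirichletCharacter ℂ 4 := ZMod.χ₄.ringHomComp (Int.castRingHom ℂ)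

/-- The partition sum of formula (2.9) (the character `χ_{-4}`). -/
def chiFourEvalSum (κ d : ℕ) (strict : Bool) : ℂ :=
  ∑ μ : Nat.Partition d,
    ((if strict then (-1 : ℂ) ^ ((d : ℤ) - μ.parts.card) else 1) / (zPart μ : ℂ)) *
    ((-1 : ℂ) ^ μ.parts.card *
        Complex.I ^ (μ.parts.filter fun p => p % 2 = 1).card *
        ((μ.parts.filter fun p => p % 2 = 0).map fun pj => ((2 : ℂ) ^ (κ * pj) - 1)).prod /
      2 ^ (μ.parts.card + κ * (μ.parts.filter fun p => p % 2 = 1).sum)) *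
    ((μ.parts.filter fun p => p % 2 = 1).map fun pj =>
      (eulerNumber (κ * pj - 1) : ℂ) / ((κ * pj - 1).factorial : ℂ)).prod *
    ((μ.parts.filter fun p => p % 2 = 0).map fun pj =>
      (bernoulli' (κ * pj) : ℂ) / ((κ * pj).factorial : ℂ)).prod


/-!
The truncated sums are the elementary (strict case) and the complete homogeneous (non-strict
case) symmetric functions of the numbers `x_m = χ_{-4}(m) / m^κ`, `1 ≤ m ≤ M`. Newton's identities
turn both into sums over partitions `μ ⊢ d` of `± p_μ / z_μ` in the power sums
`p_i = ∑_m x_m^i`, so it suffices to let `M → ∞` in each `p_i`. As `κ` is odd, for odd `i` the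
limit is `L(κi, χ_{-4})`, given by the Bernoulli polynomial value `B_{κi}(1/4)`, which is an Euler
number (for `κi = 1` it is Leibniz's series); for even `i` it is
`∑_{m odd} m^{-κi} = (1 - 2^{-κi}) ζ(κi)`, given by a Bernoulli number.
-/

section BernoulliAtOneFourth

open PowerSeries

lemma constantCoeff_exp_add_rescale_neg_one_exp :
    constantCoeff (exp ℚ + rescale (-1) (exp ℚ)) = 2 := by
  rw [← coeff_zero_eq_constantCoeff_apply, map_add, coeff_rescale, coeff_exp]
  norm_num

lemma eulerNumber_eq_coeff (n : ℕ) :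
    eulerNumber n = 2 * n.factorial * coeff n (exp ℚ + rescale (-1) (exp ℚ))⁻¹ := by
  have hC : (mk fun m => (1 + (-1 : ℚ) ^ m) / m.factorial) = exp ℚ + rescale (-1) (exp ℚ) := by
    ext m
    simp [coeff_exp, div_eq_mul_inv, add_mul]
  rw [eulerNumber, hC, ← map_ofNat C, coeff_C_mul]
  ring

lemma eulerNumber_zero : eulerNumber 0 = 1 := by
  rw [eulerNumber_eq_coeff, coeff_zero_eq_constantCoeff, constantCoeff_inv,
    constantCoeff_exp_add_rescale_neg_one_exp]
  norm_num

def bernoulliEGF (t : ℚ) : ℚ⟦X⟧ := mk fun n => (Polynomial.bernoulli n).eval t / n.factorial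

lemma bernoulliEGF_mul_exp_sub_one (t : ℚ) :
    bernoulliEGF t * (exp ℚ - 1) = X * rescale t (exp ℚ) := by
  convert Polynomial.bernoulli_generating_function t using 2
  ext n
  simp [bernoulliEGF, div_eq_inv_mul]

lemma bernoulliEGF_one_fourth_sub_three_fourths :
    bernoulliEGF (1 / 4) - bernoulliEGF (3 / 4) =
      -(X * rescale (1 / 4) (exp ℚ + rescale (-1) (exp ℚ))⁻¹) := by
  have hexp : exp ℚ - 1 ≠ 0 := fun h => by simpa using congrArg (coeff 1) h
  have hC := PowerSeries.mul_inv_cancel (exp ℚ + rescale (-1) (exp ℚ))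
    (by rw [constantCoeff_exp_add_rescale_neg_one_exp]; norm_num)
  have hCq : rescale (1 / 4 : ℚ) (exp ℚ + rescale (-1) (exp ℚ)) =
      rescale (1 / 4) (exp ℚ) + rescale (-(1 / 4)) (exp ℚ) := by
    rw [map_add, rescale_rescale]; norm_num
  have hinv := congrArg (rescale (1 / 4 : ℚ)) hC
  rw [map_mul, map_one] at hinv
  apply mul_right_cancel₀ hexp
  apply mul_right_cancel₀ (left_ne_zero_of_mul_eq_one hinv)
  rw [hCq] at hinv ⊢
  -- After multiplying by `(e^X - 1)(e^{X/4} + e^{-X/4})` both sides are `X (1 - e^X)`.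
  have m1 := PowerSeries.exp_mul_exp_eq_exp_add (A := ℚ) (1 / 4) (1 / 4)
  have m2 := PowerSeries.exp_mul_exp_eq_exp_add (A := ℚ) (1 / 4) (-(1 / 4))
  have m3 := PowerSeries.exp_mul_exp_eq_exp_add (A := ℚ) (3 / 4) (1 / 4)
  have m4 := PowerSeries.exp_mul_exp_eq_exp_add (A := ℚ) (3 / 4) (-(1 / 4))
  norm_num [rescale_zero] at m1 m2 m3 m4
  linear_combination
    (rescale (1 / 4 : ℚ) (exp ℚ) + rescale (-(1 / 4)) (exp ℚ)) *
      (bernoulliEGF_mul_exp_sub_one (1 / 4) - bernoulliEGF_mul_exp_sub_one (3 / 4))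
    + X * (exp ℚ - 1) * hinv + X * (m1 + m2 - m3 - m4)

lemma bernoulli_eval_one_fourth_of_odd {n : ℕ} (hn : Odd n) :
    (Polynomial.bernoulli n).eval (1 / 4 : ℚ) = -n * eulerNumber (n - 1) / 4 ^ n := by
  obtain ⟨m, rfl⟩ : ∃ m, n = m + 1 := ⟨n - 1, by have := hn.pos; omega⟩
  have hcoeff := congrArg (coeff (m + 1)) bernoulliEGF_one_fourth_sub_three_fourths
  have hreflect := Polynomial.bernoulli_eval_one_sub (m + 1) (1 / 4)
  rw [hn.neg_one_pow] at hreflect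
  norm_num only at hreflect
  simp only [bernoulliEGF, map_sub, map_neg, coeff_succ_X_mul, coeff_rescale, coeff_mk,
    hreflect] at hcoeff
  rw [eulerNumber_eq_coeff, Nat.add_sub_cancel]
  rw [Nat.factorial_succ, Nat.cast_mul] at hcoeff
  have h4 : (1 / 4 : ℚ) ^ m * 4 ^ m = 1 := by rw [← mul_pow]; norm_num
  rw [eq_div_iff (by positivity)]
  field_simp at hcoeff
  push_cast at hcoeff ⊢
  linear_combination (2 * 4 ^ m) * hcoeff -
    2 * (m + 1) * m.factorial * coeff m (exp ℚ + rescale (-1) (exp ℚ))⁻¹ * h4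

end BernoulliAtOneFourth

section PartitionSum

def zMultiset (s : Multiset ℕ) : ℕ := ∏ i ∈ s.toFinset, i ^ s.count i * (s.count i).factorial

lemma zMultiset_cons (i : ℕ) (t : Multiset ℕ) :
    zMultiset (i ::ₘ t) = i * (t.count i + 1) * zMultiset t := by
  set f : Multiset ℕ → ℕ → ℕ := fun s a => a ^ s.count a * (s.count a).factorial
  have hfi : i ∉ t.toFinset → f t i = 1 := fun h => by
    simp [f, Multiset.count_eq_zero.2 (by simpa using h)]
  have hrest : ∀ a ∈ (insert i t.toFinset).erase i, f (i ::ₘ t) a = f t a :=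
    fun a ha => by simp only [f, Multiset.count_cons_of_ne (Finset.ne_of_mem_erase ha)]
  change ∏ a ∈ (i ::ₘ t).toFinset, f (i ::ₘ t) a = _ * ∏ a ∈ t.toFinset, f t a
  rw [Multiset.toFinset_cons, ← Finset.prod_insert_of_eq_one_if_notMem hfi,
    ← Finset.mul_prod_erase _ _ (Finset.mem_insert_self i _),
    ← Finset.mul_prod_erase _ (f t) (Finset.mem_insert_self i _), Finset.prod_congr rfl hrest]
  simp only [f, Multiset.count_cons_self, pow_succ, Nat.factorial_succ]
  ring

lemma zMultiset_ne_zero {s : Multiset ℕ} (h : 0 ∉ s) : zMultiset s ≠ 0 :=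
  Finset.prod_ne_zero_iff.2 fun a ha => by
    have : a ≠ 0 := fun h0 => h (h0 ▸ Multiset.mem_toFinset.1 ha)
    positivity

def partitionMultisets (d : ℕ) : Finset (Multiset ℕ) :=
  (univ : Finset (Nat.Partition d)).image Nat.Partition.parts

lemma mem_partitionMultisets {d : ℕ} {s : Multiset ℕ} :
    s ∈ partitionMultisets d ↔ s.sum = d ∧ ∀ a ∈ s, 0 < a := by
  constructor
  · intro hs
    obtain ⟨μ, -, rfl⟩ := Finset.mem_image.1 hs
    exact ⟨μ.parts_sum, fun a ha => μ.parts_pos ha⟩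
  · rintro ⟨hsum, hpos⟩
    exact Finset.mem_image.2 ⟨⟨s, hpos _, hsum⟩, Finset.mem_univ _, rfl⟩

lemma sum_partitionMultisets_sum_toFinset {M : Type*} [AddCommMonoid M] (d : ℕ)
    (f : Multiset ℕ → ℕ → M) :
    ∑ s ∈ partitionMultisets d, ∑ i ∈ s.toFinset, f s i =
      ∑ i ∈ Icc 1 d, ∑ t ∈ partitionMultisets (d - i), f (i ::ₘ t) i := by
  rw [Finset.sum_sigma', Finset.sum_sigma']
  refine Finset.sum_nbij' (fun p => ⟨p.2, p.1.erase p.2⟩) (fun p => ⟨p.1 ::ₘ p.2, p.1⟩)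
    ?_ ?_ ?_ ?_ ?_
  · rintro ⟨s, i⟩ hp
    simp only [Finset.mem_sigma, Multiset.mem_toFinset, mem_partitionMultisets,
      Finset.mem_Icc] at hp ⊢
    obtain ⟨⟨hsum, hpos⟩, hi⟩ := hp
    have hcons := congrArg Multiset.sum (Multiset.cons_erase hi)
    rw [Multiset.sum_cons] at hcons
    exact ⟨⟨hpos i hi, by omega⟩, by omega, fun a ha => hpos a (Multiset.mem_of_mem_erase ha)⟩
  · rintro ⟨i, t⟩ hp
    simp only [Finset.mem_sigma, Multiset.mem_toFinset, mem_partitionMultisets,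
      Finset.mem_Icc, Multiset.sum_cons, Multiset.mem_cons] at hp ⊢
    obtain ⟨⟨hi1, hid⟩, hsum, hpos⟩ := hp
    refine ⟨⟨by omega, ?_⟩, Or.inl trivial⟩
    rintro a (rfl | ha)
    exacts [hi1, hpos a ha]
  · rintro ⟨s, i⟩ hp
    simp only [Finset.mem_sigma, Multiset.mem_toFinset] at hp
    simp [Multiset.cons_erase hp.2]
  · rintro ⟨i, t⟩ -
    simp
  · rintro ⟨s, i⟩ hp
    simp only [Finset.mem_sigma, Multiset.mem_toFinset] at hp
    simp [Multiset.cons_erase hp.2]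

variable {K : Type*} [Field K]

def partitionSum (q : ℕ → K) (d : ℕ) : K :=
  ∑ μ : Nat.Partition d, (μ.parts.map q).prod / zPart μ

lemma partitionSum_eq_sum_partitionMultisets (q : ℕ → K) (d : ℕ) :
    partitionSum q d = ∑ s ∈ partitionMultisets d, (s.map q).prod / zMultiset s := by
  rw [partitionMultisets, Finset.sum_image fun μ _ ν _ h => Nat.Partition.ext h]
  rfl

lemma partitionSum_zero (q : ℕ → K) : partitionSum q 0 = 1 := by
  simp [partitionSum, zPart]

lemma natCast_mul_partitionSum [CharZero K] (q : ℕ → K) (d : ℕ) :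
    d * partitionSum q d = ∑ i ∈ Icc 1 d, q i * partitionSum q (d - i) := by
  simp_rw [partitionSum_eq_sum_partitionMultisets, Finset.mul_sum]
  have hcount : ∀ s ∈ partitionMultisets d, (d : K) * ((s.map q).prod / zMultiset s) =
      ∑ i ∈ s.toFinset, (i * s.count i : ℕ) * ((s.map q).prod / zMultiset s) := by
    intro s hs
    rw [← Finset.sum_mul, ← Nat.cast_sum, ← (mem_partitionMultisets.1 hs).1,
      Finset.sum_multiset_count]
    simp_rw [smul_eq_mul, mul_comm]
  rw [Finset.sum_congr rfl hcount, sum_partitionMultisets_sum_toFinset]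
  refine Finset.sum_congr rfl fun i hi => Finset.sum_congr rfl fun t ht => ?_
  have hi0 : (i : K) ≠ 0 := Nat.cast_ne_zero.2 (by grind)
  have ht0 : (zMultiset t : K) ≠ 0 :=
    Nat.cast_ne_zero.2 (zMultiset_ne_zero fun h => lt_irrefl 0 ((mem_partitionMultisets.1 ht).2 0 h))
  rw [zMultiset_cons, Multiset.count_cons_self, Multiset.map_cons, Multiset.prod_cons]
  push_cast
  field_simp

lemma eq_partitionSum_of_recurrence [CharZero K] (q F : ℕ → K) (h0 : F 0 = 1)
    (hrec : ∀ d, d * F d = ∑ i ∈ Icc 1 d, q i * F (d - i)) (d : ℕ) :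
    F d = partitionSum q d := by
  induction d using Nat.strong_induction_on with
  | _ d ih =>
    rcases Nat.eq_zero_or_pos d with rfl | hd
    · rw [h0, partitionSum_zero]
    · refine mul_left_cancel₀ (Nat.cast_ne_zero.2 hd.ne') ?_
      rw [hrec, natCast_mul_partitionSum]
      exact Finset.sum_congr rfl fun i hi => by rw [ih _ (by grind)]

lemma tendsto_partitionSum {α : Type*} [TopologicalSpace K] [ContinuousAdd K] [ContinuousMul K]
    {l : Filter α} {q : α → ℕ → K} {q' : ℕ → K} (h : ∀ i, 0 < i → Tendsto (fun a => q a i) l (𝓝 (q' i))) (d : ℕ) :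
    Tendsto (fun a => partitionSum (q a) d) l (𝓝 (partitionSum q' d)) :=
  tendsto_finsetSum _ fun μ _ => (tendsto_multiset_prod _ fun i hi =>
    h i (μ.parts_pos hi)).div_const _

end PartitionSum

section NewtonIdentities

variable {ι R : Type*}

def powerSum [CommSemiring R] (s : Finset ι) (x : ι → R) (i : ℕ) : R := ∑ a ∈ s, x a ^ i

lemma natCast_mul_esymm [CommRing R] (s : Finset ι) (x : ι → R) (d : ℕ) :
    d * (s.val.map x).esymm d =
      ∑ i ∈ Icc 1 d, (-1) ^ (i + 1) * powerSum s x i * (s.val.map x).esymm (d - i) := by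
  have hnewton :=
    congrArg (MvPolynomial.aeval fun a : s => x a) (MvPolynomial.mul_esymm_eq_sum s R d)
  have hesymm (n : ℕ) : MvPolynomial.aeval (fun a : s => x a) (MvPolynomial.esymm s R n) =
      (s.val.map x).esymm n := by
    rw [MvPolynomial.aeval_esymm_eq_multiset_esymm, Finset.univ_eq_attach]
    exact congrArg (Multiset.esymm · n) (Multiset.attach_map_val' s.val x)
  have hpsum (n : ℕ) : MvPolynomial.aeval (fun a : s => x a) (MvPolynomial.psum s R n) =
      powerSum s x n := by
    simp [MvPolynomial.psum, powerSum, Finset.sum_attach s (fun a => x a ^ n)]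
  simp only [map_mul, map_natCast, map_sum, map_pow, map_neg, map_one, hesymm, hpsum]
    at hnewton
  rw [hnewton, Finset.mul_sum]
  refine Finset.sum_nbij' Prod.snd (fun i => (d - i, i)) ?_ ?_ ?_ (fun _ _ => rfl) ?_
  all_goals simp only [Finset.mem_filter, Finset.HasAntidiagonal.mem_antidiagonal,
    Finset.mem_Icc]
  · rintro ⟨a, b⟩ h; omega
  · intro i h; omega
  · rintro ⟨a, b⟩ ⟨hab, -⟩
    exact Prod.ext (by dsimp only at hab ⊢; omega) rfl
  · rintro ⟨a, b⟩ ⟨hab, -⟩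
    obtain rfl : a = d - b := by omega
    have hsign : (-1 : R) ^ (d + 1) * (-1) ^ (d - b) = (-1) ^ (b + 1) := by
      rw [← pow_add, show d + 1 + (d - b) = 2 * (d - b) + (b + 1) by omega, pow_add, pow_mul]
      simp
    rw [← hsign]
    ring

lemma esymm_eq_partitionSum {K : Type*} [Field K] [CharZero K] (s : Finset ι) (x : ι → K)
    (d : ℕ) :
    (s.val.map x).esymm d = partitionSum (fun i => (-1) ^ (i + 1) * powerSum s x i) d :=
  eq_partitionSum_of_recurrence _ _ (by simp [Multiset.esymm]) (natCast_mul_esymm s x) d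

variable [DecidableEq ι]

def symMultisets (s : Finset ι) (n : ℕ) : Finset (Multiset ι) :=
  (s.sym n).map ⟨(↑), Sym.coe_injective⟩

lemma mem_symMultisets {s : Finset ι} {n : ℕ} {m : Multiset ι} :
    m ∈ symMultisets s n ↔ Multiset.card m = n ∧ ∀ a ∈ m, a ∈ s := by
  simp only [symMultisets, Finset.mem_map, Finset.mem_sym_iff, Function.Embedding.coeFn_mk]
  constructor
  · rintro ⟨m, hm, rfl⟩
    exact ⟨m.2, hm⟩
  · rintro ⟨hcard, hm⟩
    exact ⟨⟨m, hcard⟩, hm, rfl⟩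

lemma sum_symMultisets_sum_Icc_count {M : Type*} [AddCommMonoid M]
    {s : Finset ι} {a : ι} (ha : a ∈ s) (n : ℕ) (f : Multiset ι → ℕ → M) :
    ∑ m ∈ symMultisets s n, ∑ j ∈ Icc 1 (m.count a), f m j =
      ∑ i ∈ Icc 1 n, ∑ m ∈ symMultisets s (n - i), f (m + Multiset.replicate i a) i := by
  rw [Finset.sum_sigma', Finset.sum_sigma']
  refine Finset.sum_nbij' (fun p => ⟨p.2, p.1 - Multiset.replicate p.2 a⟩)
    (fun p => ⟨p.2 + Multiset.replicate p.1 a, p.1⟩) ?_ ?_ ?_ ?_ ?_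
  all_goals simp only [Finset.mem_sigma, mem_symMultisets, Finset.mem_Icc]
  · rintro ⟨m, j⟩ ⟨⟨hcard, hm⟩, hj1, hj⟩
    dsimp only at *
    have hrep := Multiset.le_count_iff_replicate_le.1 hj
    have := Multiset.count_le_card a m
    refine ⟨⟨hj1, by omega⟩, by simp [Multiset.card_sub hrep, hcard], fun b hb => ?_⟩
    exact hm b (Multiset.mem_of_le (Multiset.sub_le_self _ _) hb)
  · rintro ⟨i, m⟩ ⟨⟨hi1, hin⟩, hcard, hm⟩
    dsimp only at *
    refine ⟨⟨by simp [hcard]; omega, fun b hb => ?_⟩, hi1, by simp⟩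
    rcases Multiset.mem_add.1 hb with hb | hb
    · exact hm b hb
    · rwa [Multiset.eq_of_mem_replicate hb]
  · rintro ⟨m, j⟩ ⟨-, -, hj⟩
    rw [tsub_add_cancel_of_le (Multiset.le_count_iff_replicate_le.1 hj)]
  · rintro ⟨i, m⟩ -
    rw [add_tsub_cancel_right]
  · rintro ⟨m, j⟩ ⟨-, -, hj⟩
    rw [tsub_add_cancel_of_le (Multiset.le_count_iff_replicate_le.1 hj)]

def completeHomogeneous [CommSemiring R] (s : Finset ι) (x : ι → R) (n : ℕ) : R :=
  ∑ m ∈ symMultisets s n, (m.map x).prod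

lemma completeHomogeneous_zero [CommSemiring R] (s : Finset ι) (x : ι → R) :
    completeHomogeneous s x 0 = 1 := by
  simp only [completeHomogeneous, symMultisets, Finset.sym_zero, Finset.map_singleton,
    Function.Embedding.coeFn_mk, Finset.sum_singleton]
  rfl

lemma natCast_mul_completeHomogeneous [CommSemiring R] (s : Finset ι) (x : ι → R)
    (d : ℕ) :
    d * completeHomogeneous s x d =
      ∑ i ∈ Icc 1 d, powerSum s x i * completeHomogeneous s x (d - i) := by
  have hcard : ∀ m ∈ symMultisets s d, (d : R) * (m.map x).prod =
      ∑ a ∈ s, ∑ _j ∈ Icc 1 (m.count a), (m.map x).prod := by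
    intro m hm
    obtain ⟨hcard, hsub⟩ := mem_symMultisets.1 hm
    simp [← Finset.sum_mul, ← Nat.cast_sum, Multiset.sum_count_eq_card hsub, hcard]
  rw [completeHomogeneous, Finset.mul_sum, Finset.sum_congr rfl hcard, Finset.sum_comm]
  simp_rw [powerSum, Finset.sum_mul, completeHomogeneous, Finset.mul_sum]
  rw [Finset.sum_comm (s := Icc 1 d)]
  refine Finset.sum_congr rfl fun a ha => ?_
  rw [sum_symMultisets_sum_Icc_count ha]
  simp [Multiset.prod_replicate, mul_comm]

lemma completeHomogeneous_eq_partitionSum {K : Type*} [Field K] [CharZero K] (s : Finset ι)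
    (x : ι → K) (d : ℕ) :
    completeHomogeneous s x d = partitionSum (powerSum s x) d :=
  eq_partitionSum_of_recurrence _ _ (completeHomogeneous_zero s x)
    (natCast_mul_completeHomogeneous s x) d

end NewtonIdentities

section SortedTuples

variable {α R : Type*} [LinearOrder α] [CommSemiring R]

lemma sum_strictMono_tuples_eq_esymm (s : Finset α) (x : α → R) (d : ℕ) :
    ∑ m ∈ (Fintype.piFinset fun _ : Fin d => s).filter (fun m => ∀ i j, i < j → m i < m j),
      ∏ j, x (m j) = (s.val.map x).esymm d := by
  rw [Finset.esymm_map_val]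
  refine Finset.sum_bij (fun m _ => univ.image m) ?_ ?_ ?_ ?_
  · intro m hm
    rw [Finset.mem_filter, Fintype.mem_piFinset] at hm
    have hmono : StrictMono m := hm.2
    rw [Finset.mem_powersetCard, Finset.card_image_of_injective _ hmono.injective]
    exact ⟨Finset.image_subset_iff.2 fun j _ => hm.1 j, by simp⟩
  · intro m₁ hm₁ m₂ hm₂ h
    rw [Finset.mem_filter] at hm₁ hm₂
    have := congrArg ((↑) : Finset α → Set α) h
    simp only [Finset.coe_image, Finset.coe_univ, Set.image_univ] at this
    exact (StrictMono.range_inj hm₁.2 hm₂.2).1 this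
  · intro A hA
    rw [Finset.mem_powersetCard] at hA
    refine ⟨A.orderEmbOfFin hA.2, ?_, ?_⟩
    · rw [Finset.mem_filter, Fintype.mem_piFinset]
      exact ⟨fun j => hA.1 (A.orderEmbOfFin_mem hA.2 j),
        fun i j hij => (A.orderEmbOfFin hA.2).strictMono hij⟩
    · apply Finset.coe_injective
      simp
  · intro m hm
    rw [Finset.mem_filter] at hm
    rw [Finset.prod_image fun i _ j _ h => (show StrictMono m from hm.2).injective h]

lemma sum_monotone_tuples_eq_completeHomogeneous (s : Finset α) (x : α → R) (d : ℕ) :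
    ∑ m ∈ (Fintype.piFinset fun _ : Fin d => s).filter (fun m => ∀ i j, i < j → m i ≤ m j),
      ∏ j, x (m j) = completeHomogeneous s x d := by
  rw [completeHomogeneous]
  refine Finset.sum_bij (fun m _ => (List.ofFn m : Multiset α)) ?_ ?_ ?_ ?_
  · intro m hm
    rw [Finset.mem_filter, Fintype.mem_piFinset] at hm
    simpa [mem_symMultisets] using hm.1
  · intro m₁ hm₁ m₂ hm₂ h
    rw [Finset.mem_filter, ← monotone_iff_forall_lt] at hm₁ hm₂
    exact List.ofFn_injective ((Multiset.coe_eq_coe.1 h).eq_of_sortedLE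
      hm₁.2.sortedLE_ofFn hm₂.2.sortedLE_ofFn)
  · intro m hm
    obtain ⟨hcard, hs⟩ := mem_symMultisets.1 hm
    have hlen : (m.sort (· ≤ ·)).length = d := by rw [Multiset.length_sort, hcard]
    refine ⟨fun j => (m.sort (· ≤ ·)).get (Fin.cast hlen.symm j), ?_, ?_⟩
    · rw [Finset.mem_filter, Fintype.mem_piFinset]
      exact ⟨fun j => hs _ ((Multiset.mem_sort _).1 (List.get_mem _ _)),
        fun i j hij => (Multiset.pairwise_sort m _).rel_get_of_lt hij⟩
    · conv_rhs => rw [← Multiset.sort_eq m (· ≤ ·)]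
      congr 1
      exact List.ext_get (by simp [hlen]) fun n h₁ h₂ => by simp
  · intro m hm
    simp [List.prod_ofFn]

end SortedTuples

section ChiFourLValues

open Real ZMod

lemma tendsto_sum_Icc_of_hasSum {M : Type*} [AddCommMonoid M] [TopologicalSpace M]
    {f : ℕ → M} {a : M} (hf : HasSum f a) (h0 : f 0 = 0) :
    Tendsto (fun N => ∑ m ∈ Icc 1 N, f m) atTop (𝓝 a) := by
  refine (hf.tendsto_sum_nat.comp (tendsto_add_atTop_nat 1)).congr fun N => ?_
  rw [Function.comp_apply, Finset.range_eq_Ico, Finset.sum_eq_sum_Ico_succ_bot (by omega), h0,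
    zero_add, Finset.Ico_add_one_right_eq_Icc]

namespace ZMod

lemma χ₄_nat_eq_sin (m : ℕ) : (χ₄ m : ℝ) = Real.sin (2 * π * m * (1 / 4)) := by
  have hm : 2 * π * m * (1 / 4) = π * (m % 4 : ℕ) / 2 + (m / 4 : ℕ) * (2 * π) := by
    conv_lhs => rw [← Nat.mod_add_div m 4]
    push_cast
    ring
  rw [hm, Real.sin_add_nat_mul_two_pi, χ₄_nat_mod_four]
  have h4 : m % 4 < 4 := Nat.mod_lt _ (by norm_num)
  interval_cases m % 4
  · simp
  · simp
  · simp [show π * 2 / 2 = π by ring]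
  · simp only [Nat.cast_ofNat, show π * 3 / 2 = π / 2 + π by ring, Real.sin_add_pi]
    simp

lemma χ₄_pow_of_odd (a : ZMod 4) {i : ℕ} (hi : Odd i) : χ₄ a ^ i = χ₄ a := by
  rcases isQuadratic_χ₄ a with h | h | h <;> simp [h, hi.neg_one_pow, hi.pos.ne']

lemma χ₄_pow_of_even (a : ZMod 4) {i : ℕ} (hi : Even i) (hi0 : i ≠ 0) : χ₄ a ^ i = χ₄ a ^ 2 := by
  rcases isQuadratic_χ₄ a with h | h | h <;> simp [h, hi.neg_one_pow, hi0]

lemma χ₄_nat_sq (m : ℕ) : (χ₄ m : ℝ) ^ 2 = if m % 2 = 0 then 0 else 1 := by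
  rw [χ₄_nat_eq_if_mod_four]
  split_ifs <;> simp

lemma sum_Icc_χ₄_div_eq_sum_range (N : ℕ) :
    ∑ m ∈ Icc 1 N, (χ₄ m : ℝ) / m = ∑ j ∈ range ((N + 1) / 2), (-1 : ℝ) ^ j / (2 * j + 1) := by
  induction N with
  | zero => simp
  | succ N ih =>
    rw [Finset.sum_Icc_succ_top (by omega), ih]
    rcases Nat.even_or_odd (N + 1) with ⟨u, hu⟩ | ⟨t, ht⟩
    · rw [χ₄_nat_eq_if_mod_four, if_pos (by omega), show (N + 1 + 1) / 2 = (N + 1) / 2 by omega]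
      simp
    · rw [show (N + 1 + 1) / 2 = (N + 1) / 2 + 1 by omega, Finset.sum_range_succ,
        χ₄_eq_neg_one_pow (by omega), show (N + 1) / 2 = t by omega, ht]
      push_cast
      ring

end ZMod

lemma tendsto_sum_χ₄_div_pow_odd (n : ℕ) :
    Tendsto (fun N : ℕ => ∑ m ∈ Icc 1 N, (χ₄ m : ℝ) / (m : ℝ) ^ (2 * n + 1)) atTop
      (𝓝 ((-1) ^ n * eulerNumber (2 * n) * π ^ (2 * n + 1) /
        (2 ^ (2 * n + 2) * (2 * n).factorial))) := by
  rcases eq_or_ne n 0 with rfl | hn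
  · have hhalf : Tendsto (fun N : ℕ => (N + 1) / 2) atTop atTop :=
      tendsto_atTop_atTop.2 fun b => ⟨2 * b, fun a ha => by omega⟩
    simp_rw [mul_zero, zero_add, pow_one, sum_Icc_χ₄_div_eq_sum_range]
    convert Real.tendsto_sum_pi_div_four.comp hhalf using 2
    · rfl
    · rw [eulerNumber_zero]
      norm_num
  refine tendsto_sum_Icc_of_hasSum ?_ (by simp)
  have h := hasSum_one_div_nat_pow_mul_sin hn (x := 1 / 4) ⟨by norm_num, by norm_num⟩
  simp_rw [← χ₄_nat_eq_sin, one_div_mul_eq_div] at h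
  convert h using 1
  have h14 : (1 / 4 : ℝ) = algebraMap ℚ ℝ (1 / 4) := by norm_num
  rw [h14, Polynomial.eval_map, Polynomial.eval₂_at_apply,
    bernoulli_eval_one_fourth_of_odd (odd_two_mul_add_one n), Nat.add_sub_cancel,
    Nat.factorial_succ]
  push_cast
  field_simp
  norm_num
  rw [show (4 : ℝ) ^ (2 * n + 1) = 2 ^ (2 * n + 1) * 2 ^ (2 * n + 1) by rw [← mul_pow]; norm_num]
  ring

lemma hasSum_χ₄_sq_div_pow {n : ℕ} (hn : n ≠ 0) :
    HasSum (fun m : ℕ => (χ₄ m : ℝ) ^ 2 / (m : ℝ) ^ (2 * n))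
      ((-1) ^ (n + 1) * (2 ^ (2 * n) - 1) * π ^ (2 * n) * bernoulli' (2 * n) /
        (2 * (2 * n).factorial)) := by
  have hζ := hasSum_zeta_nat hn
  have hpow : ∀ m : ℕ, ((2 * m : ℕ) : ℝ) ^ (2 * n) = 4 ^ n * (m : ℝ) ^ (2 * n) := fun m => by
    rw [Nat.cast_mul, mul_pow, pow_mul]; norm_num
  have heven : HasSum (fun m : ℕ => if m % 2 = 0 then 1 / (m : ℝ) ^ (2 * n) else 0)
      ((-1) ^ (n + 1) * 2 ^ (2 * n - 1) * π ^ (2 * n) * bernoulli (2 * n) / (2 * n).factorial /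
        4 ^ n) := by
    rw [← (mul_right_injective₀ (two_ne_zero' ℕ)).hasSum_iff fun m hm => if_neg fun h =>
      hm ⟨m / 2, show 2 * (m / 2) = m by omega⟩]
    refine (hζ.div_const (4 ^ n)).congr_fun fun m => ?_
    rw [Function.comp_apply, if_pos (Nat.mul_mod_right 2 m), hpow, div_div, mul_comm]
  have hodd := (hζ.sub heven).congr_fun (g := fun m : ℕ => (χ₄ m : ℝ) ^ 2 / (m : ℝ) ^ (2 * n))
    fun m => by rw [χ₄_nat_sq]; split_ifs <;> simp
  convert hodd using 1
  · rfl
  rw [bernoulli_eq_bernoulli'_of_ne_one (by omega), show (4 : ℝ) ^ n = 2 ^ (2 * n) by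
    rw [pow_mul]; norm_num, ← Nat.sub_add_cancel (show 1 ≤ 2 * n by omega)]
  simp only [Nat.add_sub_cancel]
  field_simp
  ring

end ChiFourLValues


section ChiFour

open ZMod

/-- The value of `∑ m, χ_{-4}(m)^i / m^{κ i}`, written in the shape of the factors in
`chiFourEvalSum`. -/
def chiFourPowLValue (κ i : ℕ) : ℂ :=
  if i % 2 = 1 then
    I ^ (κ * i) * -I * (eulerNumber (κ * i - 1) / (κ * i - 1).factorial) * (Real.pi : ℂ) ^ (κ * i) /
      2 ^ (κ * i + 1)
  else
    I ^ (κ * i) * -1 * (2 ^ (κ * i) - 1) * (bernoulli' (κ * i) / (κ * i).factorial) *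
      (Real.pi : ℂ) ^ (κ * i) / 2

lemma I_pow_two_mul (n : ℕ) : I ^ (2 * n) = (((-1) ^ n : ℝ) : ℂ) := by
  rw [pow_mul, I_sq]
  push_cast
  ring

lemma chiFourPowLValue_of_odd {κ i n : ℕ} (hi : i % 2 = 1) (hn : κ * i = 2 * n + 1) :
    chiFourPowLValue κ i = (((-1) ^ n * eulerNumber (2 * n) * Real.pi ^ (2 * n + 1) /
      (2 ^ (2 * n + 2) * (2 * n).factorial) : ℝ) : ℂ) := by
  rw [chiFourPowLValue, if_pos hi, hn, pow_succ, I_pow_two_mul, Nat.add_sub_cancel]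
  have hI : I * -I = 1 := by rw [mul_neg, I_mul_I, neg_neg]
  push_cast
  linear_combination (((-1) ^ n : ℂ) * eulerNumber (2 * n) * (Real.pi : ℂ) ^ (2 * n + 1) /
    (2 ^ (2 * n + 2) * (2 * n).factorial)) * hI

lemma chiFourPowLValue_of_even {κ i n : ℕ} (hi : i % 2 = 0) (hn : κ * i = 2 * n) :
    chiFourPowLValue κ i = (((-1) ^ (n + 1) * (2 ^ (2 * n) - 1) * Real.pi ^ (2 * n) *
      bernoulli' (2 * n) / (2 * (2 * n).factorial) : ℝ) : ℂ) := by
  rw [chiFourPowLValue, if_neg (by omega), hn, I_pow_two_mul]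
  push_cast
  ring

lemma tendsto_powerSum_chiFour {κ i : ℕ} (hκ : Odd κ) (hi : 0 < i) :
    Tendsto (fun N => powerSum (Icc 1 N) (fun m : ℕ => chiFour m / (m : ℂ) ^ κ) i) atTop
      (𝓝 (chiFourPowLValue κ i)) := by
  have hterm (N : ℕ) : powerSum (Icc 1 N) (fun m : ℕ => chiFour m / (m : ℂ) ^ κ) i =
      ((∑ m ∈ Icc 1 N, ((χ₄ m ^ i : ℤ) : ℝ) / (m : ℝ) ^ (κ * i) : ℝ) : ℂ) := by
    push_cast
    simp [powerSum, chiFour, div_pow, pow_mul]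
  simp_rw [hterm]
  rcases Nat.even_or_odd i with hi' | hi'
  · obtain ⟨n, hn⟩ : ∃ n, κ * i = 2 * n := ⟨κ * i / 2, by have := hi'.mul_left κ; grind⟩
    have hn0 : n ≠ 0 := by have := Nat.mul_pos hκ.pos hi; omega
    rw [chiFourPowLValue_of_even (Nat.even_iff.1 hi') hn]
    simp_rw [χ₄_pow_of_even _ hi' hi.ne', hn]
    refine Tendsto.ofReal ?_
    exact tendsto_sum_Icc_of_hasSum (by exact_mod_cast hasSum_χ₄_sq_div_pow hn0) (by simp)
  · obtain ⟨n, hn⟩ : ∃ n, κ * i = 2 * n + 1 := hκ.mul hi'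
    rw [chiFourPowLValue_of_odd (Nat.odd_iff.1 hi') hn]
    simp_rw [χ₄_pow_of_odd _ hi', hn]
    exact (tendsto_sum_χ₄_div_pow_odd n).ofReal


lemma prod_map_chiFourPowLValue (κ : ℕ) (s : Multiset ℕ) :
    (s.map (chiFourPowLValue κ)).prod =
      I ^ (κ * s.sum) * (Real.pi : ℂ) ^ (κ * s.sum) *
      ((-1) ^ Multiset.card s * I ^ Multiset.card (s.filter fun p => p % 2 = 1) *
        ((s.filter fun p => p % 2 = 0).map fun p => (2 : ℂ) ^ (κ * p) - 1).prod /
        2 ^ (Multiset.card s + κ * (s.filter fun p => p % 2 = 1).sum)) *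
      ((s.filter fun p => p % 2 = 1).map fun p =>
        (eulerNumber (κ * p - 1) : ℂ) / (κ * p - 1).factorial).prod *
      ((s.filter fun p => p % 2 = 0).map fun p =>
        (bernoulli' (κ * p) : ℂ) / (κ * p).factorial).prod := by
  induction s using Multiset.induction_on with
  | empty => simp
  | cons a s ih =>
    rw [Multiset.map_cons, Multiset.prod_cons, ih, chiFourPowLValue]
    by_cases ha : a % 2 = 1
    · rw [if_pos ha, Multiset.filter_cons_of_pos (p := fun p => p % 2 = 1) s ha,
        Multiset.filter_cons_of_neg (p := fun p => p % 2 = 0) s (by omega)]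
      simp only [Multiset.card_cons, Multiset.sum_cons, Multiset.map_cons, Multiset.prod_cons]
      rw [show Multiset.card s + 1 + κ * (a + (s.filter fun p => p % 2 = 1).sum) =
        (κ * a + 1) + (Multiset.card s + κ * (s.filter fun p => p % 2 = 1).sum) by ring]
      simp only [mul_add, pow_add, pow_succ]
      ring
    · rw [if_neg ha, Multiset.filter_cons_of_neg (p := fun p => p % 2 = 1) s ha,
        Multiset.filter_cons_of_pos (p := fun p => p % 2 = 0) s (by omega)]
      simp only [Multiset.card_cons, Multiset.sum_cons, Multiset.map_cons, Multiset.prod_cons]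
      simp only [mul_add, pow_add, pow_succ, add_right_comm _ 1]
      ring

lemma prod_map_neg_one_pow_succ_mul {R : Type*} [CommRing R] (f : ℕ → R) (s : Multiset ℕ) :
    (s.map fun i => (-1) ^ (i + 1) * f i).prod =
      (-1) ^ (s.sum + Multiset.card s) * (s.map f).prod := by
  induction s using Multiset.induction_on with
  | empty => simp
  | cons a s ih =>
    simp only [Multiset.map_cons, Multiset.prod_cons, ih, Multiset.sum_cons, Multiset.card_cons]
    ring

lemma partitionSum_chiFourPowLValue (κ d : ℕ) :
    partitionSum (chiFourPowLValue κ) d =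
      I ^ (κ * d) * chiFourEvalSum κ d false * (Real.pi : ℂ) ^ (κ * d) := by
  rw [partitionSum, chiFourEvalSum, Finset.mul_sum, Finset.sum_mul]
  refine Finset.sum_congr rfl fun μ _ => ?_
  rw [prod_map_chiFourPowLValue, μ.parts_sum]
  simp only [Bool.false_eq_true, if_false]
  ring

lemma partitionSum_neg_one_pow_succ_mul_chiFourPowLValue (κ d : ℕ) :
    partitionSum (fun i => (-1) ^ (i + 1) * chiFourPowLValue κ i) d =
      I ^ (κ * d) * chiFourEvalSum κ d true * (Real.pi : ℂ) ^ (κ * d) := by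
  rw [partitionSum, chiFourEvalSum, Finset.mul_sum, Finset.sum_mul]
  refine Finset.sum_congr rfl fun μ _ => ?_
  have hsign :
      (-1 : ℂ) ^ ((d : ℤ) - Multiset.card μ.parts) = (-1) ^ (d + Multiset.card μ.parts) := by
    rw [show (d : ℤ) - Multiset.card μ.parts = ((d + Multiset.card μ.parts : ℕ) : ℤ) -
      2 * Multiset.card μ.parts by push_cast; ring, zpow_sub₀ (by norm_num), zpow_natCast, zpow_mul]
    norm_num
  rw [prod_map_neg_one_pow_succ_mul, prod_map_chiFourPowLValue, μ.parts_sum, if_pos rfl, hsign]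
  ring

end ChiFour

theorem multiple_L_value_chi_four_general
    (k d : ℕ) (κ : ℕ) (hκ : κ = 2 * k + 1) :
    Tendsto (multLSumLt chiFour d κ) atTop
      (𝓝 (Complex.I ^ (κ * d) * chiFourEvalSum κ d true * (Real.pi : ℂ) ^ (κ * d))) ∧
    Tendsto (multLSumLe chiFour d κ) atTop
      (𝓝 (Complex.I ^ (κ * d) * chiFourEvalSum κ d false * (Real.pi : ℂ) ^ (κ * d))) := by
  set x : ℕ → ℂ := fun m => chiFour m / (m : ℂ) ^ κ
  have hpow (i : ℕ) (hi : 0 < i) :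
      Tendsto (fun N => powerSum (Icc 1 N) x i) atTop (𝓝 (chiFourPowLValue κ i)) :=
    tendsto_powerSum_chiFour ⟨k, hκ⟩ hi
  have hLt : multLSumLt chiFour d κ =
      fun N => partitionSum (fun i => (-1) ^ (i + 1) * powerSum (Icc 1 N) x i) d :=
    funext fun N => (sum_strictMono_tuples_eq_esymm _ x d).trans (esymm_eq_partitionSum _ x d)
  have hLe : multLSumLe chiFour d κ = fun N => partitionSum (powerSum (Icc 1 N) x) d :=
    funext fun N => (sum_monotone_tuples_eq_completeHomogeneous _ x d).trans
      (completeHomogeneous_eq_partitionSum _ x d)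
  rw [hLt, hLe, ← partitionSum_neg_one_pow_succ_mul_chiFourPowLValue,
    ← partitionSum_chiFourPowLValue]
  exact ⟨tendsto_partitionSum (fun i hi => (hpow i hi).const_mul _) d, tendsto_partitionSum hpow d⟩

/-- **Formula (2.9)**: for the primitive Dirichlet character `χ_{-4}` mod 4 and
`κ = 2k + 1 ≥ 1` (`k ≥ 0`), `d ≥ 1`,
`L^ω_d({κ}^d; {χ_{-4}}^d) = (-1)^{κd/2}
  [Σ_{μ ⊢ d} (ε^ω_μ/z_μ) ((-1)^{ℓ(μ) + ℓ(μ_o)/2} ∏_{μ_j even}(2^{κμ_j}-1) / 2^{ℓ(μ)+κ|μ_o|})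
    ∏_{μ_j odd} E_{κμ_j-1}/(κμ_j-1)! ∏_{μ_j even} B_{κμ_j}/(κμ_j)!] π^{κd}`,
with the half-integer signs written via `I = √-1`; the multiple `L`-value is
expressed as the limit of its truncations. -/
theorem multiple_L_value_chi_four
    (k d : ℕ) (hd : 1 ≤ d) (κ : ℕ) (hκ : κ = 2 * k + 1) :
    Tendsto (multLSumLt chiFour d κ) atTop
      (𝓝 (Complex.I ^ (κ * d) * chiFourEvalSum κ d true * (Real.pi : ℂ) ^ (κ * d))) ∧
    Tendsto (multLSumLe chiFour d κ) atTop
      (𝓝 (Complex.I ^ (κ * d) * chiFourEvalSum κ d false * (Real.pi : ℂ) ^ (κ * d))) :=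
  multiple_L_value_chi_four_general k d κ hκ

end
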